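/- arXiv:2312.09941 — 2 statements merged into one kernel-verified Lean document; each statement's English description precedes it below -/
import Mathlib

section
/- Let α > 1 and let f_α(s) = (1 - sinc²(s/2))/s^α for s > 0. Define η_α(h) = h·Σ_{m≥1} f_α(mh) and η_α = ∫₀^∞ f_α(s) ds. Then η_α(h) → η_α as h → 0⁺ whenever 1 < α < 3. -/
open MeasureTheory Filter

noncomputable def sinc (x : ℝ) : ℝ := if x = 0 then 1 else Real.sin x / x

noncomputable def fa (α s : ℝ) : ℝ := (1 - (sinc (s / 2)) ^ 2) / s ^ α

lemma abs_sinc_le_one (x : ℝ) : |sinc x| ≤ 1 := by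
  unfold sinc
  split_ifs with h
  · simp
  · rw [abs_div]
    exact div_le_one_of_le₀ Real.abs_sin_le_abs (abs_nonneg _)

lemma sinc_sq_le_one (x : ℝ) : sinc x ^ 2 ≤ 1 := by
  have := abs_sinc_le_one x
  nlinarith [abs_nonneg (sinc x), sq_abs (sinc x)]

lemma fa_nonneg (α : ℝ) {s : ℝ} (hs : 0 < s) : 0 ≤ fa α s :=
  div_nonneg (by linarith [sinc_sq_le_one (s/2)]) (Real.rpow_nonneg hs.le α)

lemma fa_le_rpow_neg (α : ℝ) {s : ℝ} (hs : 0 < s) : fa α s ≤ s ^ (-α) := by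
  rw [Real.rpow_neg hs.le]
  have h2 : 0 < s ^ α := Real.rpow_pos_of_pos hs α
  rw [fa, div_le_iff₀ h2, inv_mul_cancel₀ h2.ne']
  nlinarith [sq_nonneg (sinc (s/2))]

lemma one_sub_sinc_sq {x : ℝ} (hx : 0 < x) (hx1 : x ≤ 1) : 1 - sinc x ^ 2 ≤ x ^ 2 / 2 := by
  have hsin : x - x ^ 3 / 4 < Real.sin x := by have := Real.sin_gt_sub_cube hx; nlinarith [pow_pos hx 3]
  have hsin2 : Real.sin x ≤ x := (Real.sin_lt hx).le
  have hs : sinc x = Real.sin x / x := by rw [sinc, if_neg hx.ne']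
  have : 1 - sinc x ^ 2 = (x - Real.sin x) * (x + Real.sin x) / x ^ 2 := by
    rw [hs]; field_simp; ring
  rw [this, div_le_iff₀ (by positivity)]
  nlinarith [Real.sin_pos_of_pos_of_le_one hx hx1]

lemma fa_le_small (α : ℝ) {t : ℝ} (ht : 0 < t) (ht2 : t ≤ 2) :
    fa α t ≤ t ^ (2 - α) / 8 := by
  have h1 : 1 - sinc (t / 2) ^ 2 ≤ t ^ 2 / 8 := by
    have := one_sub_sinc_sq (x := t / 2) (by linarith) (by linarith)
    nlinarith
  have h2 : 0 < t ^ α := Real.rpow_pos_of_pos ht α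
  have h3 : t ^ (2 - α) = t ^ (2:ℝ) / t ^ α := by
    rw [Real.rpow_sub ht]
  have h4 : t ^ (2 - α) / 8 = t ^ 2 / 8 / t ^ α := by
    rw [Real.rpow_sub ht, ← Real.rpow_two]; ring
  rw [fa, h4]
  exact div_le_div_of_nonneg_right (by linarith) h2.le

lemma measurable_sinc : Measurable sinc := by
  unfold sinc
  exact Measurable.ite (measurableSet_singleton 0) measurable_const
    (Real.measurable_sin.div measurable_id)

lemma measurable_fa (α : ℝ) : Measurable (fa α) := by
  unfold fa
  exact ((((measurable_sinc.comp (measurable_id.div_const 2)).pow_const 2).const_sub 1)).div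
    (measurable_id.pow_const α)


lemma continuousAt_sinc {y : ℝ} (hy : y ≠ 0) : ContinuousAt sinc y := by
  have hev : (fun x : ℝ => Real.sin x / x) =ᶠ[nhds y] sinc := by
    filter_upwards [isOpen_ne.mem_nhds hy] with x hx
    rw [sinc, if_neg hx]
  exact (Real.continuous_sin.continuousAt.div continuousAt_id hy).congr hev

lemma continuousAt_fa (α : ℝ) {s : ℝ} (hs : 0 < s) : ContinuousAt (fa α) s := by
  have h1 : ContinuousAt sinc (s / 2) := continuousAt_sinc (by positivity)
  have h2 : ContinuousAt (fun t : ℝ => t ^ α) s :=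
    Real.continuousAt_rpow_const s α (Or.inl hs.ne')
  have h3 : ContinuousAt (fun t : ℝ => sinc (t / 2)) s :=
    ContinuousAt.comp (g := sinc) (x := s) h1 ((continuous_id.div_const (2:ℝ)).continuousAt)
  exact (continuousAt_const.sub (h3.pow 2)).div h2 (Real.rpow_pos_of_pos hs α).ne'

lemma step_ge {h s : ℝ} (hh : 0 < h) (hs : 0 < s) : s ≤ h * (⌈s / h⌉₊ : ℝ) := by
  have := Nat.le_ceil (s / h)
  rw [div_le_iff₀ hh] at this
  linarith [this]

lemma step_lt {h s : ℝ} (hh : 0 < h) (hs : 0 < s) : h * (⌈s / h⌉₊ : ℝ) < s + h := by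
  have h0 : (0:ℝ) ≤ s / h := by positivity
  have := Nat.ceil_lt_add_one h0
  have h2 : h * (⌈s / h⌉₊ : ℝ) < h * (s / h + 1) := by
    exact (mul_lt_mul_iff_right₀ hh).mpr this
  have h3 : h * (s / h + 1) = s + h := by field_simp
  linarith

lemma measurable_step {h : ℝ} (hh : 0 < h) :
    Measurable (fun s : ℝ => h * (⌈s / h⌉₊ : ℝ)) := by
  have hmono : Monotone (fun s : ℝ => (⌈s / h⌉₊ : ℝ)) := by
    intro a b hab
    simp only [Nat.cast_le]
    exact Nat.ceil_le_ceil (div_le_div_of_nonneg_right hab hh.le)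
  exact (hmono.measurable).const_mul h

lemma iUnion_Ioc_eq_Ioi {h : ℝ} (hh : 0 < h) :
    (⋃ m : ℕ, Set.Ioc ((m : ℝ) * h) (((m : ℝ) + 1) * h)) = Set.Ioi 0 := by
  ext x
  simp only [Set.mem_iUnion, Set.mem_Ioc, Set.mem_Ioi]
  constructor
  · rintro ⟨m, hm1, -⟩
    have : (0:ℝ) ≤ (m : ℝ) * h := by positivity
    linarith
  · intro hx
    have hxh : (0:ℝ) < x / h := by positivity
    have hn1 : 1 ≤ ⌈x / h⌉₊ := Nat.one_le_ceil_iff.mpr hxh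
    refine ⟨⌈x / h⌉₊ - 1, ?_, ?_⟩
    · have hcast : ((⌈x / h⌉₊ - 1 : ℕ) : ℝ) = (⌈x / h⌉₊ : ℝ) - 1 := by
        push_cast [hn1]; ring
      rw [hcast]
      have := Nat.ceil_lt_add_one hxh.le
      have h2 : ((⌈x / h⌉₊ : ℝ) - 1) < x / h := by linarith
      calc ((⌈x / h⌉₊ : ℝ) - 1) * h < (x / h) * h := by
            exact (mul_lt_mul_iff_left₀ hh).mpr h2
        _ = x := by field_simp
    · have hcast : ((⌈x / h⌉₊ - 1 : ℕ) : ℝ) + 1 = (⌈x / h⌉₊ : ℝ) := by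
        push_cast [hn1]; ring
      rw [hcast]
      have := Nat.le_ceil (x / h)
      calc x = (x / h) * h := by field_simp
        _ ≤ (⌈x / h⌉₊ : ℝ) * h := by exact (mul_le_mul_iff_left₀ hh).mpr this

lemma ceil_eq_on_Ioc {h : ℝ} (hh : 0 < h) (m : ℕ) {s : ℝ}
    (hs : s ∈ Set.Ioc ((m : ℝ) * h) (((m : ℝ) + 1) * h)) : ⌈s / h⌉₊ = m + 1 := by
  obtain ⟨h1, h2⟩ := hs
  refine le_antisymm ?_ ?_
  · rw [Nat.ceil_le]
    push_cast
    rw [div_le_iff₀ hh]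
    linarith
  · rw [Nat.succ_le_iff, Nat.lt_ceil]
    rw [lt_div_iff₀ hh]
    linarith

lemma integral_step_eq {α h : ℝ} (hh : 0 < h)
    (hint : IntegrableOn (fun s => fa α (h * (⌈s / h⌉₊ : ℝ))) (Set.Ioi 0)) :
    ∫ s in Set.Ioi (0:ℝ), fa α (h * (⌈s / h⌉₊ : ℝ)) = h * ∑' m : ℕ, fa α ((m + 1) * h) := by
  have hdisj : Pairwise (Function.onFun Disjoint fun m : ℕ =>
      Set.Ioc ((m : ℝ) * h) (((m : ℝ) + 1) * h)) := by
    intro i j hij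
    rcases hij.lt_or_gt with hlt | hlt
    all_goals {
      rw [Function.onFun, Set.disjoint_left]
      intro x hx1 hx2
      obtain ⟨ha1, ha2⟩ := hx1
      obtain ⟨hb1, hb2⟩ := hx2
      have : ((i:ℝ) + 1) ≤ (j:ℝ) ∨ ((j:ℝ) + 1) ≤ (i:ℝ) := by
        rcases hij.lt_or_gt with hl | hl
        · left; exact_mod_cast Nat.succ_le_of_lt hl
        · right; exact_mod_cast Nat.succ_le_of_lt hl
      rcases this with hc | hc
      · nlinarith
      · nlinarith
    }
  rw [← iUnion_Ioc_eq_Ioi hh] at hint ⊢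
  rw [MeasureTheory.integral_iUnion (fun m => measurableSet_Ioc) hdisj hint]
  rw [← tsum_mul_left]
  refine tsum_congr fun m => ?_
  have hconst : ∀ s ∈ Set.Ioc ((m : ℝ) * h) (((m : ℝ) + 1) * h),
      fa α (h * (⌈s / h⌉₊ : ℝ)) = fa α (((m:ℝ) + 1) * h) := by
    intro s hs
    rw [ceil_eq_on_Ioc hh m hs]
    push_cast
    ring_nf
  rw [setIntegral_congr_fun measurableSet_Ioc hconst, setIntegral_const]
  rw [Real.volume_real_Ioc_of_le (mul_le_mul_of_nonneg_right (by linarith) hh.le)]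
  have : ((m:ℝ) + 1) * h - (m:ℝ) * h = h := by ring
  rw [this, smul_eq_mul]


lemma integrable_bound {α : ℝ} (hα : 1 < α) (hα3 : α < 3) :
    IntegrableOn (fun s : ℝ => if s < 1 then (s ^ (2 - α) + 2) / 8 else s ^ (-α))
      (Set.Ioi 0) := by
  have h1 : IntegrableOn (fun s : ℝ => (s ^ (2 - α) + 2) / 8) (Set.Ioo 0 1) := by
    have hr : IntegrableOn (fun s : ℝ => s ^ (2 - α)) (Set.Ioo 0 1) := by
      have h := intervalIntegral.intervalIntegrable_rpow' (a := 0) (b := 1) (r := 2 - α) (by linarith)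
      rw [intervalIntegrable_iff_integrableOn_Ioc_of_le zero_le_one] at h
      exact h.mono_set Set.Ioo_subset_Ioc_self
    have hc : IntegrableOn (fun _ : ℝ => (2:ℝ)) (Set.Ioo 0 1) := by
      apply (integrableOn_const_iff (C := (2:ℝ))).mpr
      right
      rw [Real.volume_Ioo]
      exact ENNReal.ofReal_lt_top
    exact (hr.add hc).div_const 8
  have h2 : IntegrableOn (fun s : ℝ => s ^ (-α)) (Set.Ici 1) := by
    rw [integrableOn_Ici_iff_integrableOn_Ioi]
    exact integrableOn_Ioi_rpow_of_lt (by linarith) one_pos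
  have hU : Set.Ioi (0:ℝ) = Set.Ioo 0 1 ∪ Set.Ici 1 :=
    (Set.Ioo_union_Ici_eq_Ioi one_pos).symm
  rw [hU]
  apply IntegrableOn.union
  · exact h1.congr_fun (fun s hs => by rw [if_pos hs.2]) measurableSet_Ioo
  · exact h2.congr_fun (fun s hs => by rw [if_neg (not_lt.mpr hs)]) measurableSet_Ici

theorem stmt_1 (α : ℝ) (hα : 1 < α) (hα3 : α < 3) :
    Tendsto (fun h : ℝ => h * ∑' m : ℕ, fa α ((m + 1) * h))
      (nhdsWithin 0 (Set.Ioi 0))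
      (nhds (∫ s in Set.Ioi (0 : ℝ), fa α s)) := by
  set bound : ℝ → ℝ := fun s => if s < 1 then (s ^ (2 - α) + 2) / 8 else s ^ (-α) with hbdef
  set F : ℝ → ℝ → ℝ := fun h s => fa α (h * (⌈s / h⌉₊ : ℝ)) with hFdef
  have hbi : Integrable bound (volume.restrict (Set.Ioi 0)) := integrable_bound hα hα3
  have hmem : Set.Ioc (0:ℝ) 1 ∈ nhdsWithin (0:ℝ) (Set.Ioi 0) :=
    Ioc_mem_nhdsGT zero_lt_one
  have hFmeas : ∀ h : ℝ, 0 < h → AEStronglyMeasurable (F h) (volume.restrict (Set.Ioi 0)) :=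
    fun h hh => ((measurable_fa α).comp (measurable_step hh)).aestronglyMeasurable
  have hboundF : ∀ h ∈ Set.Ioc (0:ℝ) 1, ∀ s ∈ Set.Ioi (0:ℝ), ‖F h s‖ ≤ bound s := by
    rintro h ⟨hh, hh1⟩ s hs
    rw [Set.mem_Ioi] at hs
    have ht1 : s ≤ h * (⌈s / h⌉₊ : ℝ) := step_ge hh hs
    have ht2 : h * (⌈s / h⌉₊ : ℝ) < s + h := step_lt hh hs
    have htpos : 0 < h * (⌈s / h⌉₊ : ℝ) := lt_of_lt_of_le hs ht1
    simp only [hFdef]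
    rw [Real.norm_of_nonneg (fa_nonneg α htpos)]
    by_cases hs1 : s < 1
    · have ht2' : h * (⌈s / h⌉₊ : ℝ) ≤ 2 := by linarith
      have hsm := fa_le_small α htpos ht2'
      have hle : (h * (⌈s / h⌉₊ : ℝ)) ^ (2 - α) ≤ s ^ (2 - α) + 2 := by
        rcases le_or_gt α 2 with hA | hA
        · have k1 : (h * (⌈s / h⌉₊ : ℝ)) ^ (2 - α) ≤ (2:ℝ) ^ (2 - α) :=
            Real.rpow_le_rpow htpos.le ht2' (by linarith)
          have k2 : (2:ℝ) ^ (2 - α) ≤ (2:ℝ) ^ (1:ℝ) :=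
            Real.rpow_le_rpow_of_exponent_le one_le_two (by linarith)
          have k3 : (0:ℝ) ≤ s ^ (2 - α) := Real.rpow_nonneg hs.le _
          rw [Real.rpow_one] at k2
          linarith
        · have k1 : (h * (⌈s / h⌉₊ : ℝ)) ^ (2 - α) ≤ s ^ (2 - α) :=
            Real.rpow_le_rpow_of_nonpos hs ht1 (by linarith)
          linarith
      simp only [hbdef, if_pos hs1]
      linarith
    · have hsm := fa_le_rpow_neg α htpos
      have k1 : (h * (⌈s / h⌉₊ : ℝ)) ^ (-α) ≤ s ^ (-α) :=
        Real.rpow_le_rpow_of_nonpos hs ht1 (by linarith)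
      simp only [hbdef, if_neg hs1]
      linarith
  have hlim : ∀ s ∈ Set.Ioi (0:ℝ), Tendsto (fun h => F h s)
      (nhdsWithin 0 (Set.Ioi 0)) (nhds (fa α s)) := by
    intro s hs
    rw [Set.mem_Ioi] at hs
    have hstep : Tendsto (fun h : ℝ => h * (⌈s / h⌉₊ : ℝ))
        (nhdsWithin 0 (Set.Ioi 0)) (nhds s) := by
      have hub : Tendsto (fun h : ℝ => s + h) (nhdsWithin (0:ℝ) (Set.Ioi 0)) (nhds s) := by
        have h0 : Tendsto (fun h : ℝ => s + h) (nhds (0:ℝ)) (nhds (s + 0)) :=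
          (continuous_const.add continuous_id).tendsto 0
        simpa using h0.mono_left nhdsWithin_le_nhds
      refine tendsto_of_tendsto_of_tendsto_of_le_of_le' tendsto_const_nhds hub ?_ ?_
      · filter_upwards [self_mem_nhdsWithin] with h hh
        exact step_ge hh hs
      · filter_upwards [self_mem_nhdsWithin] with h hh
        exact (step_lt hh hs).le
    exact (continuousAt_fa α hs).tendsto.comp hstep
  have hdct := MeasureTheory.tendsto_integral_filter_of_dominated_convergence
    (l := nhdsWithin 0 (Set.Ioi 0)) (μ := volume.restrict (Set.Ioi 0)) (F := F) (f := fa α) bound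
    (by filter_upwards [self_mem_nhdsWithin] with h hh; exact hFmeas h hh)
    (by filter_upwards [hmem] with h hh
        rw [ae_restrict_iff' measurableSet_Ioi]
        exact ae_of_all _ (hboundF h hh))
    hbi
    (by rw [ae_restrict_iff' measurableSet_Ioi]; exact ae_of_all _ hlim)
  refine hdct.congr' ?_
  filter_upwards [hmem] with h hh
  have hint : IntegrableOn (F h) (Set.Ioi 0) := by
    refine hbi.mono' (hFmeas h hh.1) ?_
    rw [ae_restrict_iff' measurableSet_Ioi]
    exact ae_of_all _ (hboundF h hh)
  exact integral_step_eq hh.1 hint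
end

section
/- Let α > 1 with 2ζ(α+1) - ζ(α) > 0. For η ∈ ℓ²(ℤ) define P₂(η) = Σ_{j∈ℤ} Σ_{m≥1} m^{-(α+2)} (G_m η_j)², where G_m η_j = Σ_{l=0}^{m-1} η_{j+l}. Then (2ζ(α+1) - ζ(α))‖η‖²_{ℓ²} ≤ P₂(η) ≤ ζ(α)‖η‖²_{ℓ²}. -/
open Finset
open scoped ENNReal NNReal

/-- `ζ(s) = Σ_{m ≥ 1} m^{-s}`. -/
noncomputable def zetaR (s : ℝ) : ℝ := ∑' m : ℕ, ((m : ℝ) + 1) ^ (-s)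

/-- `G_m η_j = Σ_{l=0}^{m-1} η_{j+l}`. -/
def Gm (m : ℕ) (η : ℤ → ℝ) (j : ℤ) : ℝ := ∑ l ∈ Finset.range m, η (j + l)

section Aux

variable {η : ℤ → ℝ}

lemma shift_summable (hS : Summable fun j => η j ^ 2) (l : ℤ) :
    Summable fun j : ℤ => η (j + l) ^ 2 :=
  ((Equiv.addRight l).summable_iff (f := fun j => η j ^ 2)).2 hS

lemma shift_tsum (l : ℤ) : ∑' j : ℤ, η (j + l) ^ 2 = ∑' j : ℤ, η j ^ 2 :=
  (Equiv.addRight l).tsum_eq (fun j => η j ^ 2)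

lemma prod_abs_le (l k j : ℤ) :
    |η (j + l) * η (j + k)| ≤ (η (j + l) ^ 2 + η (j + k) ^ 2) / 2 := by
  rw [abs_mul]
  nlinarith [sq_abs (η (j + l)), sq_abs (η (j + k)),
    sq_nonneg (|η (j + l)| - |η (j + k)|), abs_nonneg (η (j + l)), abs_nonneg (η (j + k))]

lemma prod_abs_summable (hS : Summable fun j => η j ^ 2) (l k : ℤ) :
    Summable fun j : ℤ => |η (j + l) * η (j + k)| := by
  apply Summable.of_nonneg_of_le (fun j => abs_nonneg _) (fun j => prod_abs_le l k j)
  exact ((shift_summable hS l).add (shift_summable hS k)).div_const 2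

lemma prod_summable (hS : Summable fun j => η j ^ 2) (l k : ℤ) :
    Summable fun j : ℤ => η (j + l) * η (j + k) :=
  (prod_abs_summable hS l k).of_abs

lemma prod_tsum_bound (hS : Summable fun j => η j ^ 2) (l k : ℤ) :
    |∑' j : ℤ, η (j + l) * η (j + k)| ≤ ∑' j : ℤ, η j ^ 2 := by
  have hn : Summable fun j : ℤ => ‖η (j + l) * η (j + k)‖ := by
    simpa only [Real.norm_eq_abs] using prod_abs_summable hS l k
  have h1 : |∑' j : ℤ, η (j + l) * η (j + k)| ≤ ∑' j : ℤ, |η (j + l) * η (j + k)| := by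
    have := norm_tsum_le_tsum_norm hn
    simpa only [Real.norm_eq_abs] using this
  refine h1.trans ?_
  have h2 : ∑' j : ℤ, |η (j + l) * η (j + k)| ≤ ∑' j : ℤ, (η (j + l) ^ 2 + η (j + k) ^ 2) / 2 :=
    Summable.tsum_le_tsum (fun j => prod_abs_le l k j) (prod_abs_summable hS l k)
      (((shift_summable hS l).add (shift_summable hS k)).div_const 2)
  refine h2.trans_eq ?_
  rw [tsum_div_const, Summable.tsum_add (shift_summable hS l) (shift_summable hS k),
    shift_tsum, shift_tsum]
  ring

lemma Gm_sq_expand (m : ℕ) (j : ℤ) :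
    Gm m η j ^ 2 = ∑ l ∈ range m, ∑ k ∈ range m, η (j + l) * η (j + k) := by
  rw [Gm, sq, Finset.sum_mul_sum]

lemma Gm_sq_summable (hS : Summable fun j => η j ^ 2) (m : ℕ) :
    Summable fun j : ℤ => Gm m η j ^ 2 := by
  simp only [Gm_sq_expand]
  exact summable_sum fun l _ => summable_sum fun k _ => prod_summable hS l k

lemma Gm_tsum_eq (hS : Summable fun j => η j ^ 2) (m : ℕ) :
    ∑' j : ℤ, Gm m η j ^ 2
      = ∑ l ∈ range m, ∑ k ∈ range m, ∑' j : ℤ, η (j + l) * η (j + k) := by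
  simp only [Gm_sq_expand]
  have h1 : ∀ l ∈ range m, Summable fun j : ℤ => ∑ k ∈ range m, η (j + l) * η (j + k) :=
    fun l _ => summable_sum fun k _ => prod_summable hS l k
  rw [Summable.tsum_finsetSum h1]
  refine Finset.sum_congr rfl fun l _ => ?_
  exact Summable.tsum_finsetSum fun k _ => prod_summable hS (l : ℤ) k

lemma Gm_tsum_upper (hS : Summable fun j => η j ^ 2) (m : ℕ) :
    ∑' j : ℤ, Gm m η j ^ 2 ≤ (m : ℝ) ^ 2 * ∑' j : ℤ, η j ^ 2 := by
  set S := ∑' j : ℤ, η j ^ 2 with hSdef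
  rw [Gm_tsum_eq hS m]
  calc ∑ l ∈ range m, ∑ k ∈ range m, ∑' j : ℤ, η (j + l) * η (j + k)
      ≤ ∑ l ∈ range m, ∑ k ∈ range m, S := by
        refine Finset.sum_le_sum fun l _ => Finset.sum_le_sum fun k _ => ?_
        exact (le_abs_self _).trans (prod_tsum_bound hS l k)
    _ = (m : ℝ) ^ 2 * S := by
        simp [Finset.sum_const, card_range]; ring

lemma Gm_tsum_lower (hS : Summable fun j => η j ^ 2) (m : ℕ) :
    (2 * (m : ℝ) - (m : ℝ) ^ 2) * (∑' j : ℤ, η j ^ 2) ≤ ∑' j : ℤ, Gm m η j ^ 2 := by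
  classical
  set S := ∑' j : ℤ, η j ^ 2 with hSdef
  rw [Gm_tsum_eq hS m]
  have hdiag : ∀ l : ℕ, ∑' j : ℤ, η (j + l) * η (j + l) = S := by
    intro l
    have : (fun j : ℤ => η (j + l) * η (j + l)) = fun j : ℤ => η (j + l) ^ 2 := by
      funext j; ring
    rw [this, shift_tsum]
  have hbnd : ∀ l ∈ range m, ∀ k ∈ range m,
      (-S + if l = k then 2 * S else 0) ≤ ∑' j : ℤ, η (j + l) * η (j + k) := by
    intro l _ k _
    by_cases h : l = k
    · subst h
      rw [hdiag l]
      simp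
      nlinarith [hdiag l, prod_tsum_bound hS (l : ℤ) (l : ℤ), abs_nonneg S]
    · simp only [h, if_false, add_zero]
      have := prod_tsum_bound hS (l : ℤ) (k : ℤ)
      have := neg_abs_le (∑' j : ℤ, η (j + l) * η (j + k))
      linarith
  calc (2 * (m : ℝ) - (m : ℝ) ^ 2) * S
      = ∑ l ∈ range m, ∑ k ∈ range m, (-S + if l = k then 2 * S else 0) := by
        simp only [Finset.sum_add_distrib, Finset.sum_ite_eq, Finset.sum_const, card_range,
          Finset.mem_range]
        rw [Finset.sum_congr rfl (fun x hx => if_pos (Finset.mem_range.1 hx))]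
        simp [Finset.sum_const, card_range, nsmul_eq_mul]
        ring
    _ ≤ ∑ l ∈ range m, ∑ k ∈ range m, ∑' j : ℤ, η (j + l) * η (j + k) :=
        Finset.sum_le_sum fun l hl => Finset.sum_le_sum fun k hk => hbnd l hl k hk

lemma summable_zeta {s : ℝ} (hs : 1 < s) :
    Summable fun m : ℕ => ((m : ℝ) + 1) ^ (-s) := by
  have h0 : Summable fun n : ℕ => (n : ℝ) ^ (-s) :=
    Real.summable_nat_rpow.2 (by linarith)
  have h1 := (summable_nat_add_iff (f := fun n : ℕ => (n : ℝ) ^ (-s)) 1).2 h0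
  convert h1 using 2 with n
  · rfl
  push_cast
  ring_nf

end Aux

theorem stmt_16 (α : ℝ) (hα : 1 < α) (hζ : 0 < 2 * zetaR (α + 1) - zetaR α)
    (η : ℤ → ℝ) (hη : Memℓp η 2) :
    (2 * zetaR (α + 1) - zetaR α) * (∑' j : ℤ, η j ^ 2)
        ≤ (∑' j : ℤ, ∑' m : ℕ, ((m : ℝ) + 1) ^ (-(α + 2)) * Gm (m + 1) η j ^ 2) ∧
    (∑' j : ℤ, ∑' m : ℕ, ((m : ℝ) + 1) ^ (-(α + 2)) * Gm (m + 1) η j ^ 2)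
        ≤ zetaR α * (∑' j : ℤ, η j ^ 2) := by
  -- η is square-summable
  have hS : Summable fun j : ℤ => η j ^ 2 := by
    have h := hη.summable (p := 2) (by norm_num)
    have : (fun i : ℤ => ‖η i‖ ^ (2 : ℝ≥0∞).toReal) = fun i : ℤ => η i ^ 2 := by
      funext i
      rw [show (2 : ℝ≥0∞).toReal = ((2 : ℕ) : ℝ) by norm_num, Real.rpow_natCast]
      simp [sq_abs]
    rwa [this] at h
  set S := ∑' j : ℤ, η j ^ 2 with hSdef
  have hS0 : 0 ≤ S := tsum_nonneg fun j => sq_nonneg _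
  -- the double family
  set f : ℕ → ℤ → ℝ := fun m j => ((m : ℝ) + 1) ^ (-(α + 2)) * Gm (m + 1) η j ^ 2 with hfdef
  have hw : ∀ m : ℕ, (0 : ℝ) < ((m : ℝ) + 1) ^ (-(α + 2)) := fun m => by positivity
  -- rpow arithmetic
  have hrw1 : ∀ m : ℕ, ((m : ℝ) + 1) ^ (-(α + 2)) * ((m : ℝ) + 1) ^ (2 : ℕ)
      = ((m : ℝ) + 1) ^ (-α) := by
    intro m
    have hx : (0 : ℝ) < (m : ℝ) + 1 := by positivity
    rw [← Real.rpow_natCast ((m : ℝ) + 1) 2, ← Real.rpow_add hx]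
    norm_num
  have hrw2 : ∀ m : ℕ, ((m : ℝ) + 1) ^ (-(α + 2)) * ((m : ℝ) + 1)
      = ((m : ℝ) + 1) ^ (-(α + 1)) := by
    intro m
    have hx : (0 : ℝ) < (m : ℝ) + 1 := by positivity
    nth_rewrite 2 [← Real.rpow_one ((m : ℝ) + 1)]
    rw [← Real.rpow_add hx]
    congr 1
    ring
  -- per-m tsum over j
  have hfj_sum : ∀ m : ℕ, Summable fun j : ℤ => f m j := fun m =>
    (Gm_sq_summable hS (m + 1)).mul_left _
  have hfj_tsum : ∀ m : ℕ, ∑' j : ℤ, f m j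
      = ((m : ℝ) + 1) ^ (-(α + 2)) * ∑' j : ℤ, Gm (m + 1) η j ^ 2 := fun m =>
    tsum_mul_left
  -- upper bound per m
  have hupper : ∀ m : ℕ, ∑' j : ℤ, f m j ≤ ((m : ℝ) + 1) ^ (-α) * S := by
    intro m
    rw [hfj_tsum m, ← hrw1 m]
    have := Gm_tsum_upper hS (m + 1)
    push_cast at this
    calc ((m : ℝ) + 1) ^ (-(α + 2)) * ∑' j : ℤ, Gm (m + 1) η j ^ 2
        ≤ ((m : ℝ) + 1) ^ (-(α + 2)) * (((m : ℝ) + 1) ^ 2 * S) :=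
          mul_le_mul_of_nonneg_left this (hw m).le
      _ = ((m : ℝ) + 1) ^ (-(α + 2)) * ((m : ℝ) + 1) ^ (2 : ℕ) * S := by ring
  -- lower bound per m
  have hlower : ∀ m : ℕ,
      (2 * ((m : ℝ) + 1) ^ (-(α + 1)) - ((m : ℝ) + 1) ^ (-α)) * S ≤ ∑' j : ℤ, f m j := by
    intro m
    rw [hfj_tsum m]
    have h := Gm_tsum_lower hS (m + 1)
    push_cast at h
    have h2 : ((m : ℝ) + 1) ^ (-(α + 2)) * ((2 * ((m : ℝ) + 1) - ((m : ℝ) + 1) ^ 2) * S)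
        ≤ ((m : ℝ) + 1) ^ (-(α + 2)) * ∑' j : ℤ, Gm (m + 1) η j ^ 2 :=
      mul_le_mul_of_nonneg_left h (hw m).le
    refine le_trans (le_of_eq ?_) h2
    have e1 := hrw1 m
    have e2 := hrw2 m
    rw [← e1, ← e2]
    push_cast
    ring
  -- summability facts for the weights
  have hza : Summable fun m : ℕ => ((m : ℝ) + 1) ^ (-α) := summable_zeta hα
  have hza1 : Summable fun m : ℕ => ((m : ℝ) + 1) ^ (-(α + 1)) := summable_zeta (by linarith)
  have hzaS : Summable fun m : ℕ => ((m : ℝ) + 1) ^ (-α) * S := hza.mul_right S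
  -- nonnegativity of f and summability of ∑'_j f m j
  have hf0 : ∀ m j, 0 ≤ f m j := fun m j => mul_nonneg (hw m).le (sq_nonneg _)
  have hfm_sum : Summable fun m : ℕ => ∑' j : ℤ, f m j := by
    apply Summable.of_nonneg_of_le (fun m => tsum_nonneg fun j => hf0 m j) hupper hzaS
  -- global summability on ℕ × ℤ
  have hG : Summable (Function.uncurry f) := by
    exact (summable_prod_of_nonneg (f := Function.uncurry f)
      (fun p => hf0 p.1 p.2)).2 ⟨hfj_sum, hfm_sum⟩
  -- swap the order of summation
  have hswap : (∑' j : ℤ, ∑' m : ℕ, f m j) = ∑' m : ℕ, ∑' j : ℤ, f m j := Summable.tsum_comm hG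
  have hmain : (∑' j : ℤ, ∑' m : ℕ, ((m : ℝ) + 1) ^ (-(α + 2)) * Gm (m + 1) η j ^ 2)
      = ∑' m : ℕ, ∑' j : ℤ, f m j := hswap
  rw [hmain]
  constructor
  · -- lower bound
    have hlhs : Summable fun m : ℕ =>
        (2 * ((m : ℝ) + 1) ^ (-(α + 1)) - ((m : ℝ) + 1) ^ (-α)) * S :=
      ((hza1.mul_left 2).sub hza).mul_right S
    have := Summable.tsum_le_tsum hlower hlhs hfm_sum
    refine le_trans (le_of_eq ?_) this
    rw [tsum_mul_right, Summable.tsum_sub (hza1.mul_left 2) hza, tsum_mul_left]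
    rfl
  · -- upper bound
    have := Summable.tsum_le_tsum hupper hfm_sum hzaS
    refine this.trans (le_of_eq ?_)
    rw [tsum_mul_right]
    rfl
end
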